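/- arXiv:2003.07730 — 4 statements merged into one kernel-verified Lean document; each statement's English description precedes it below -/
import Mathlib

section
/- Let M ∈ ℝ and let g : ℝ → ℝ be three times continuously differentiable on [M, ∞) with g'''(η) + g(η)·g''(η) = 0 for all η ≥ M, g''(M) > 0, g(M) > 0, and g'(η) ≥ 0 for all η ≥ M (so g is nondecreasing on [M, ∞)). Then the improper integral ∫_M^∞ g''(η) dη satisfies ∫_M^∞ g''(η) dη ≤ g''(M)·[g(M)]⁻¹. -/
/-!
On `(M, ∞)` the function `h = g''` solves the linear equation `h' = -g h`, so `h · exp (∫_M g)`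
is constant there. Since `h` is the derivative of `g'`, which is differentiable at `M`, it has no
jump at `M`, and the constant is `h M`. As `g` is nondecreasing, `∫_M^x g ≥ g M · (x - M)`, hence
`0 ≤ h x ≤ h M · exp (-g M · (x - M))`, whose integral over `(M, ∞)` is `h M / g M`.
-/

open Set Filter MeasureTheory Topology Real

theorem ContDiffOn.hasDerivAt_iteratedDeriv {𝕜 F : Type*} [NontriviallyNormedField 𝕜]
    [NormedAddCommGroup F] [NormedSpace 𝕜 F] {f : 𝕜 → F} {s : Set 𝕜} {n : WithTop ℕ∞} {m : ℕ}
    {x : 𝕜} (hf : ContDiffOn 𝕜 n f s) (hs : IsOpen s) (hm : m < n) (hx : x ∈ s) :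
    HasDerivAt (iteratedDeriv m f) (iteratedDeriv (m + 1) f x) x := by
  have hdiff := hf.differentiableOn_iteratedDerivWithin hm hs.uniqueDiffOn x hx
  have heq : iteratedDeriv m f =ᶠ[𝓝 x] iteratedDerivWithin m f s :=
    eventually_of_mem (hs.mem_nhds hx) fun y hy => (iteratedDerivWithin_of_isOpen hs hy).symm
  rw [iteratedDeriv_succ]
  exact ((hdiff.differentiableAt (hs.mem_nhds hx)).congr_of_eventuallyEq heq).hasDerivAt

theorem hasDerivAt_integral_of_continuousOn_Ici {f : ℝ → ℝ} {a x : ℝ}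
    (hf : ContinuousOn f (Ici a)) (hx : a < x) :
    HasDerivAt (fun u => ∫ t in a..u, f t) (f x) x :=
  intervalIntegral.integral_hasDerivAt_right
    ((hf.mono Icc_subset_Ici_self).intervalIntegrable_of_Icc hx.le)
    ((hf.mono Ioi_subset_Ici_self).stronglyMeasurableAtFilter isOpen_Ioi x hx)
    (hf.continuousAt (Ici_mem_nhds hx))

theorem continuousWithinAt_integral_of_continuousOn_Ici {f : ℝ → ℝ} {a : ℝ}
    (hf : ContinuousOn f (Ici a)) :
    ContinuousWithinAt (fun u => ∫ t in a..u, f t) (Ici a) a := by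
  have hint : IntegrableOn f (uIcc a (a + 1)) := by
    rw [uIcc_of_le (by linarith)]
    exact (hf.mono Icc_subset_Ici_self).integrableOn_Icc
  refine ContinuousWithinAt.mono_of_mem_nhdsWithin ?_ (Icc_mem_nhdsGE (lt_add_one a))
  rw [← uIcc_of_le (by linarith)]
  exact intervalIntegral.continuousOn_primitive_interval hint a left_mem_uIcc

theorem MonotoneOn.mul_sub_le_integral {f : ℝ → ℝ} {a x : ℝ} (hf : MonotoneOn f (Ici a))
    (hfc : ContinuousOn f (Ici a)) (hx : a ≤ x) :
    f a * (x - a) ≤ ∫ t in a..x, f t := by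
  have hmono : ∫ _ in a..x, f a ≤ ∫ t in a..x, f t :=
    intervalIntegral.integral_mono_on hx intervalIntegrable_const
      ((hfc.mono Icc_subset_Ici_self).intervalIntegrable_of_Icc hx)
      fun t ht => hf self_mem_Ici ht.1 ht.1
  simpa [mul_comm] using hmono

theorem IsOpen.mul_exp_eq_of_hasDerivAt {h G p : ℝ → ℝ} {s : Set ℝ} (hs : IsOpen s)
    (hs' : IsPreconnected s) (hG : ∀ x ∈ s, HasDerivAt G (p x) x)
    (hh : ∀ x ∈ s, HasDerivAt h (-(p x * h x)) x) {x y : ℝ} (hx : x ∈ s) (hy : y ∈ s) :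
    h x * exp (G x) = h y * exp (G y) := by
  have hderiv : ∀ z ∈ s, HasDerivAt (fun z => h z * exp (G z)) 0 z := fun z hz => by
    have hprod : HasDerivAt (fun z => h z * exp (G z))
        (-(p z * h z) * exp (G z) + h z * (exp (G z) * p z)) z := (hh z hz).mul (hG z hz).exp
    rwa [show -(p z * h z) * exp (G z) + h z * (exp (G z) * p z) = 0 by ring] at hprod
  exact hs.is_const_of_deriv_eq_zero hs'
    (fun z hz => (hderiv z hz).differentiableAt.differentiableWithinAt)
    (fun z hz => (hderiv z hz).deriv) hx hy

theorem HasDerivAt.eq_of_tendsto_deriv_nhdsGT {φ h : ℝ → ℝ} {a C : ℝ}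
    (hφa : HasDerivAt φ (h a) a) (hφ : ∀ x ∈ Ioi a, HasDerivAt φ (h x) x)
    (hlim : Tendsto h (𝓝[>] a) (𝓝 C)) : h a = C := by
  have hC : HasDerivWithinAt φ C (Ici a) a := by
    refine hasDerivWithinAt_Ici_of_tendsto_deriv (s := Ioi a)
      (fun x hx => (hφ x hx).differentiableAt.differentiableWithinAt)
      hφa.continuousAt.continuousWithinAt self_mem_nhdsWithin ?_
    exact hlim.congr' (eventually_nhdsWithin_of_forall fun x hx => (hφ x hx).deriv.symm)
  exact (uniqueDiffWithinAt_Ici a).eq_deriv _ hφa.hasDerivWithinAt hC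

theorem eq_mul_exp_sub_of_hasDerivAt_Ioi {φ h G p : ℝ → ℝ} {a : ℝ}
    (hφa : HasDerivAt φ (h a) a) (hφ : ∀ x ∈ Ioi a, HasDerivAt φ (h x) x)
    (hh : ∀ x ∈ Ioi a, HasDerivAt h (-(p x * h x)) x)
    (hG : ∀ x ∈ Ioi a, HasDerivAt G (p x) x) (hGa : ContinuousWithinAt G (Ioi a) a) :
    ∀ x ∈ Ioi a, h x = h a * exp (G a - G x) := by
  intro x hx
  have hC : ∀ y ∈ Ioi a, h y = h x * exp (G x) * exp (-G y) := fun y hy => by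
    rw [← isOpen_Ioi.mul_exp_eq_of_hasDerivAt isPreconnected_Ioi hG hh hy hx, mul_assoc,
      ← exp_add, add_neg_cancel, exp_zero, mul_one]
  have hlim : Tendsto h (𝓝[>] a) (𝓝 (h x * exp (G x) * exp (-G a))) :=
    (tendsto_const_nhds.mul hGa.neg.rexp).congr'
      (eventually_nhdsWithin_of_forall fun y hy => (hC y hy).symm)
  rw [hφa.eq_of_tendsto_deriv_nhdsGT hφ hlim, mul_assoc, mul_assoc, ← exp_add, ← exp_add,
    show G x + (-G a + (G a - G x)) = 0 by ring, exp_zero, mul_one]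

theorem exp_neg_mul_sub_eq (c a : ℝ) :
    (fun x => exp (-c * (x - a))) = fun x => exp (c * a) * exp (-c * x) := by
  ext x
  rw [← exp_add]
  ring_nf

theorem integrableOn_exp_neg_mul_sub_Ioi {c : ℝ} (hc : 0 < c) (a : ℝ) :
    IntegrableOn (fun x => exp (-c * (x - a))) (Ioi a) := by
  rw [exp_neg_mul_sub_eq]
  exact (integrableOn_exp_mul_Ioi (neg_lt_zero.mpr hc) a).const_mul _

theorem integral_exp_neg_mul_sub_Ioi {c : ℝ} (hc : 0 < c) (a : ℝ) :
    ∫ x in Ioi a, exp (-c * (x - a)) = c⁻¹ := by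
  rw [exp_neg_mul_sub_eq, integral_const_mul, integral_exp_mul_Ioi (neg_lt_zero.mpr hc),
    neg_div_neg_eq, ← mul_div_assoc, ← exp_add, show c * a + -c * a = 0 by ring, exp_zero,
    one_div]

theorem exists_tendsto_intervalIntegral_le_of_norm_le_exp {f : ℝ → ℝ} {a A c : ℝ} (hc : 0 < c)
    (hf : ContinuousOn f (Ioi a)) (hbound : ∀ x ∈ Ioi a, ‖f x‖ ≤ A * exp (-c * (x - a))) :
    ∃ I, Tendsto (fun T => ∫ x in a..T, f x) atTop (𝓝 I) ∧ I ≤ A * c⁻¹ := by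
  have hexp : IntegrableOn (fun x => A * exp (-c * (x - a))) (Ioi a) :=
    (integrableOn_exp_neg_mul_sub_Ioi hc a).const_mul A
  have hint : IntegrableOn f (Ioi a) :=
    hexp.mono' (hf.aestronglyMeasurable measurableSet_Ioi)
      ((ae_restrict_iff' measurableSet_Ioi).mpr (ae_of_all _ hbound))
  refine ⟨∫ x in Ioi a, f x, intervalIntegral_tendsto_integral_Ioi a hint tendsto_id, ?_⟩
  calc ∫ x in Ioi a, f x ≤ ∫ x in Ioi a, A * exp (-c * (x - a)) :=
        setIntegral_mono_on hint hexp measurableSet_Ioi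
          fun x hx => (le_abs_self _).trans (hbound x hx)
    _ = A * c⁻¹ := by rw [integral_const_mul, integral_exp_neg_mul_sub_Ioi hc]

/-- Bound of the improper integral of `g''` over `[M, ∞)` for a solution of
the normalized Blasius equation `g''' + g·g'' = 0`. -/
theorem improper_integral_bound
    (M : ℝ) (g : ℝ → ℝ)
    (hg : ContDiffOn ℝ 3 g (Set.Ici M))
    (hODE : ∀ η ≥ M,
      iteratedDeriv 3 g η + g η * iteratedDeriv 2 g η = 0)
    (hg''M : 0 < iteratedDeriv 2 g M)
    (hgM : 0 < g M)
    (hg' : ∀ η ≥ M, 0 ≤ deriv g η) :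
    ∃ I : ℝ,
      Tendsto (fun T => ∫ η in M..T, iteratedDeriv 2 g η) atTop (nhds I) ∧
      I ≤ iteratedDeriv 2 g M * (g M)⁻¹ := by
  have hderiv : ∀ k < 3, ∀ x ∈ Ioi M,
      HasDerivAt (iteratedDeriv k g) (iteratedDeriv (k + 1) g x) x := fun k hk x hx =>
    (hg.mono Ioi_subset_Ici_self).hasDerivAt_iteratedDeriv isOpen_Ioi (by exact_mod_cast hk) hx
  have hmono : MonotoneOn g (Ici M) :=
    monotoneOn_of_deriv_nonneg (convex_Ici M) hg.continuousOn
      (by rw [interior_Ici]; exact (hg.mono Ioi_subset_Ici_self).differentiableOn (by norm_num))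
      (by rw [interior_Ici]; exact fun x hx => hg' x hx.le)
  -- `deriv (deriv g) M` would be a junk `0` if `deriv g` were not differentiable at `M`.
  have hφM : HasDerivAt (deriv g) (iteratedDeriv 2 g M) M := by
    rw [iteratedDeriv_succ, iteratedDeriv_one] at hg''M ⊢
    exact (differentiableAt_of_deriv_ne_zero hg''M.ne').hasDerivAt
  have hφ : ∀ x ∈ Ioi M, HasDerivAt (deriv g) (iteratedDeriv 2 g x) x := by
    simpa only [iteratedDeriv_one] using hderiv 1 (by norm_num)
  have hh : ∀ x ∈ Ioi M, HasDerivAt (iteratedDeriv 2 g) (-(g x * iteratedDeriv 2 g x)) x :=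
    fun x hx => by
      rw [← eq_neg_of_add_eq_zero_left (hODE x hx.le)]
      exact hderiv 2 (by norm_num) x hx
  have hsol := eq_mul_exp_sub_of_hasDerivAt_Ioi hφM hφ hh
    (fun x hx => hasDerivAt_integral_of_continuousOn_Ici hg.continuousOn hx)
    ((continuousWithinAt_integral_of_continuousOn_Ici hg.continuousOn).mono Ioi_subset_Ici_self)
  refine exists_tendsto_intervalIntegral_le_of_norm_le_exp hgM
    (fun x hx => (hderiv 2 (by norm_num) x hx).continuousAt.continuousWithinAt) fun x hx => ?_
  rw [hsol x hx, intervalIntegral.integral_same, Real.norm_of_nonneg (by positivity)]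
  gcongr
  linarith [hmono.mul_sub_le_integral hg.continuousOn hx.le]
end

section
/- Let δ ∈ ℝ with δ ≠ 0, let Φ : ℝ × ℝ × ℝ → ℝ, and define φ(η, u, v, w) := η^((1−3δ)/δ) · Φ(η^(−1/δ)·u, η^((δ−1)/δ)·v, η^((2δ−1)/δ)·w) for η > 0. Suppose f : (0, ∞) → ℝ is three times differentiable and satisfies f'''(η) = φ(η, f(η), f'(η), f''(η)) for all η > 0. Then for every λ > 0 the scaled function f*(t) := λ·f(λ^(−δ)·t) satisfies f*'''(t) = φ(t, f*(t), f*'(t), f*''(t)) for all t > 0. -/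
/-!
With `c = λ^(-δ)`, the scaled function `f* = λ f(c ·)` has `f*⁽ⁿ⁾(t) = λ cⁿ f⁽ⁿ⁾(c t) = λ^(1-nδ) f⁽ⁿ⁾(c t)`,
while `(c t)^(p/δ) = λ^(-p) t^(p/δ)`. So the weights `η^((nδ-1)/δ)` in front of `f⁽ⁿ⁾`, `n = 0, 1, 2`,
absorb exactly these powers of `λ`, leaving the arguments of `Φ` unchanged, and the prefactor
`η^((1-3δ)/δ)` absorbs the factor `λ^(1-3δ)` of `f*'''`. Since `deriv` commutes with a linear change
of variable for every function, no differentiability of `f` enters.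
-/

theorem iteratedDeriv_comp_const_mul_field {𝕜 F : Type*} [NontriviallyNormedField 𝕜]
    [NormedAddCommGroup F] [NormedSpace 𝕜 F] (n : ℕ) (f : 𝕜 → F) (c : 𝕜) :
    iteratedDeriv n (fun x => f (c * x)) = fun x => c ^ n • iteratedDeriv n f (c * x) := by
  induction n with
  | zero => simp
  | succ n ih =>
    funext x
    rw [iteratedDeriv_succ, ih, deriv_fun_const_smul_field, deriv_comp_mul_left,
      iteratedDeriv_succ, smul_smul, pow_succ]

theorem iteratedDeriv_const_mul_comp_const_mul (n : ℕ) (a c : ℝ) (f : ℝ → ℝ) (x : ℝ) :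
    iteratedDeriv n (fun t => a * f (c * t)) x = a * c ^ n * iteratedDeriv n f (c * x) := by
  simp only [iteratedDeriv_const_mul_field, iteratedDeriv_comp_const_mul_field, smul_eq_mul,
    mul_assoc]

namespace Real

theorem rpow_neg_mul_rpow_div {l : ℝ} (hl : 0 < l) {t : ℝ} (ht : 0 ≤ t) {δ : ℝ} (hδ : δ ≠ 0)
    (p : ℝ) : (l ^ (-δ) * t) ^ (p / δ) = l ^ (-p) * t ^ (p / δ) := by
  rw [mul_rpow (rpow_nonneg hl.le _) ht, ← rpow_mul hl.le, neg_mul, mul_div_cancel₀ p hδ]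

theorem mul_rpow_neg_pow {l : ℝ} (hl : 0 < l) (δ : ℝ) (n : ℕ) :
    l * (l ^ (-δ)) ^ n = l ^ (1 - n * δ) := by
  rw [← rpow_mul_natCast hl.le, sub_eq_add_neg, rpow_add hl, rpow_one, neg_mul, mul_comm δ]

end Real

/-- The paper's `φ(η, u, v, w)`. -/
noncomputable def boundaryLayerRhs (δ : ℝ) (Φ : ℝ × ℝ × ℝ → ℝ) (η u v w : ℝ) : ℝ :=
  η ^ ((1 - 3 * δ) / δ) *
    Φ (η ^ (-(1 : ℝ) / δ) * u, η ^ ((δ - 1) / δ) * v, η ^ ((2 * δ - 1) / δ) * w)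

theorem boundaryLayerRhs_scaling {δ : ℝ} (hδ : δ ≠ 0) (Φ : ℝ × ℝ × ℝ → ℝ) {l : ℝ} (hl : 0 < l)
    {t : ℝ} (ht : 0 ≤ t) (u v w : ℝ) :
    l * (l ^ (-δ)) ^ 3 * boundaryLayerRhs δ Φ (l ^ (-δ) * t) u v w =
      boundaryLayerRhs δ Φ t (l * u) (l * l ^ (-δ) * v) (l * (l ^ (-δ)) ^ 2 * w) := by
  have hscale : ∀ p a x : ℝ, l ^ (-p) = a → (l ^ (-δ) * t) ^ (p / δ) * x = t ^ (p / δ) * (a * x) :=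
    fun p a x ha => by rw [Real.rpow_neg_mul_rpow_div hl ht hδ, ha, mul_comm a, mul_assoc]
  have h0 : l ^ (-(-1 : ℝ)) = l := by rw [neg_neg, Real.rpow_one]
  have h1 : l ^ (-(δ - 1)) = l * l ^ (-δ) := by
    rw [← pow_one (l ^ (-δ)), Real.mul_rpow_neg_pow hl]; push_cast; ring_nf
  have h2 : l ^ (-(2 * δ - 1)) = l * (l ^ (-δ)) ^ 2 := by
    rw [Real.mul_rpow_neg_pow hl]; push_cast; ring_nf
  have h3 : l * (l ^ (-δ)) ^ 3 * l ^ (-(1 - 3 * δ)) = 1 := by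
    rw [Real.mul_rpow_neg_pow hl, ← Real.rpow_add hl]; push_cast; ring_nf; exact Real.rpow_zero l
  unfold boundaryLayerRhs
  rw [hscale _ _ u h0, hscale _ _ v h1, hscale _ _ w h2, Real.rpow_neg_mul_rpow_div hl ht hδ]
  linear_combination (t ^ ((1 - 3 * δ) / δ) *
    Φ (t ^ (-1 / δ) * (l * u), t ^ ((δ - 1) / δ) * (l * l ^ (-δ) * v),
      t ^ ((2 * δ - 1) / δ) * (l * (l ^ (-δ)) ^ 2 * w))) * h3

theorem scaling_invariance_class_general
    (δ : ℝ) (hδ : δ ≠ 0)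
    (Φ : ℝ × ℝ × ℝ → ℝ)
    (φ : ℝ → ℝ → ℝ → ℝ → ℝ)
    (hφ : ∀ η > (0 : ℝ), ∀ u v w : ℝ,
      φ η u v w = η ^ ((1 - 3 * δ) / δ) *
        Φ (η ^ (-(1 : ℝ) / δ) * u, η ^ ((δ - 1) / δ) * v,
           η ^ ((2 * δ - 1) / δ) * w))
    (f : ℝ → ℝ)
    (hODE : ∀ η > (0 : ℝ),
      iteratedDeriv 3 f η = φ η (f η) (deriv f η) (iteratedDeriv 2 f η)) :
    ∀ l > (0 : ℝ),
      ∀ fs : ℝ → ℝ, fs = (fun t => l * f (l ^ (-δ) * t)) →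
      ∀ t > (0 : ℝ),
        iteratedDeriv 3 fs t =
          φ t (fs t) (deriv fs t) (iteratedDeriv 2 fs t) := by
  rintro l hl _ rfl t ht
  set c := l ^ (-δ)
  have hη : 0 < c * t := mul_pos (Real.rpow_pos_of_pos hl _) ht
  have hφ' : ∀ η > 0, ∀ u v w, φ η u v w = boundaryLayerRhs δ Φ η u v w := hφ
  simp only [← iteratedDeriv_one, iteratedDeriv_const_mul_comp_const_mul, pow_one]
  rw [hODE _ hη, hφ' _ hη, hφ' t ht, iteratedDeriv_one]
  exact boundaryLayerRhs_scaling hδ Φ hl ht.le _ _ _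

/-- Scaling invariance of the class of third-order boundary layer equations
`f''' = φ(η, f, f', f'')` with
`φ(η,u,v,w) = η^((1−3δ)/δ) Φ(η^(−1/δ) u, η^((δ−1)/δ) v, η^((2δ−1)/δ) w)`
under the group `f* = λ f`, `η* = λ^δ η`. -/
theorem scaling_invariance_class
    (δ : ℝ) (hδ : δ ≠ 0)
    (Φ : ℝ × ℝ × ℝ → ℝ)
    (φ : ℝ → ℝ → ℝ → ℝ → ℝ)
    (hφ : ∀ η > (0 : ℝ), ∀ u v w : ℝ,
      φ η u v w = η ^ ((1 - 3 * δ) / δ) *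
        Φ (η ^ (-(1 : ℝ) / δ) * u, η ^ ((δ - 1) / δ) * v,
           η ^ ((2 * δ - 1) / δ) * w))
    (f : ℝ → ℝ)
    (hf1 : DifferentiableOn ℝ f (Set.Ioi (0 : ℝ)))
    (hf2 : DifferentiableOn ℝ (deriv f) (Set.Ioi (0 : ℝ)))
    (hf3 : DifferentiableOn ℝ (deriv (deriv f)) (Set.Ioi (0 : ℝ)))
    (hODE : ∀ η > (0 : ℝ),
      iteratedDeriv 3 f η = φ η (f η) (deriv f η) (iteratedDeriv 2 f η)) :
    ∀ l > (0 : ℝ),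
      ∀ fs : ℝ → ℝ, fs = (fun t => l * f (l ^ (-δ) * t)) →
      ∀ t > (0 : ℝ),
        iteratedDeriv 3 fs t =
          φ t (fs t) (deriv fs t) (iteratedDeriv 2 fs t) :=
  scaling_invariance_class_general δ hδ Φ φ hφ f hODE
end

section
/- Let δ ∈ ℝ with δ ≠ 0 and δ ≠ 1, let d ≠ 0, let Φ : ℝ × ℝ × ℝ → ℝ, and define φ(η, u, v, w) := η^((1−3δ)/δ) · Φ(η^(−1/δ)·u, η^((δ−1)/δ)·v, η^((2δ−1)/δ)·w) for η > 0. Suppose f* : [0, ∞) → ℝ is three times continuously differentiable, satisfies f*'''(t) = φ(t, f*(t), f*'(t), f*''(t)) for all t > 0, with f*(0) = f*'(0) = 0, f*''(0) = p, and f*'(t) → L as t → ∞ where L/d > 0. Set λ := (L/d)^(1/(1−δ)). Then the rescaled function f(η) := λ^(−1)·f*(λ^δ·η) satisfies f'''(η) = φ(η, f(η), f'(η), f''(η)) for all η > 0, f(0) = f'(0) = 0, f''(0) = λ^(2δ−1)·p, and f'(η) → d as η → ∞. -/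
/-! The map `f ↦ λ⁻¹ f(λ^δ ·)` multiplies the `n`-th derivative by `λ^(nδ-1)`, and the
right-hand side `φ` is built exactly so that the equation `f''' = φ(η, f, f', f'')` is invariant
under it; the conditions at `0` are homogeneous and so preserved, while `f'(∞)` is multiplied by
`λ^(δ-1) = d / L`. -/

open Filter

theorem iteratedDeriv_comp_mul_left {𝕜 F : Type*} [NontriviallyNormedField 𝕜]
    [NormedAddCommGroup F] [NormedSpace 𝕜 F] (n : ℕ) (c : 𝕜) (g : 𝕜 → F) :
    iteratedDeriv n (fun x => g (c * x)) = fun x => c ^ n • iteratedDeriv n g (c * x) := by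
  induction n with
  | zero => simp
  | succ n ih =>
    funext x
    rw [iteratedDeriv_succ, ih, deriv_fun_const_smul_field,
      deriv_comp_mul_left c (iteratedDeriv n g), iteratedDeriv_succ, smul_smul, pow_succ]

theorem iteratedDeriv_rpow_rescale {l : ℝ} (hl : 0 < l) (δ : ℝ) (g : ℝ → ℝ) (n : ℕ) :
    iteratedDeriv n (fun η => l⁻¹ * g (l ^ δ * η)) =
      fun η => l ^ (n * δ - 1) * iteratedDeriv n g (l ^ δ * η) := by
  funext η
  simp only [iteratedDeriv_const_mul_field, iteratedDeriv_comp_mul_left]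
  rw [smul_eq_mul, ← mul_assoc, ← Real.rpow_natCast, ← Real.rpow_mul hl.le,
    ← Real.rpow_neg_one, ← Real.rpow_add hl, mul_comm δ, neg_add_eq_sub]

theorem rpow_mul_left_rpow_div {l η : ℝ} (hl : 0 < l) (hη : 0 < η) {δ : ℝ} (hδ : δ ≠ 0)
    (e : ℝ) : (l ^ δ * η) ^ (e / δ) = l ^ e * η ^ (e / δ) := by
  rw [Real.mul_rpow (by positivity) hη.le, ← Real.rpow_mul hl.le, mul_div_cancel₀ e hδ]

theorem scaling_group_invariance {δ : ℝ} (hδ : δ ≠ 0) {Φ : ℝ × ℝ × ℝ → ℝ}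
    {φ : ℝ → ℝ → ℝ → ℝ → ℝ}
    (hφ : ∀ η > (0 : ℝ), ∀ u v w : ℝ,
      φ η u v w = η ^ ((1 - 3 * δ) / δ) *
        Φ (η ^ (-(1 : ℝ) / δ) * u, η ^ ((δ - 1) / δ) * v, η ^ ((2 * δ - 1) / δ) * w))
    {l η : ℝ} (hl : 0 < l) (hη : 0 < η) (u v w : ℝ) :
    l ^ (3 * δ - 1) * φ (l ^ δ * η) u v w =
      φ η (l ^ (-1 : ℝ) * u) (l ^ (δ - 1) * v) (l ^ (2 * δ - 1) * w) := by
  have ht : 0 < l ^ δ * η := by positivity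
  simp only [hφ _ ht, hφ _ hη, rpow_mul_left_rpow_div hl hη hδ, mul_assoc]
  rw [← mul_assoc, ← Real.rpow_add hl, show 3 * δ - 1 + (1 - 3 * δ) = 0 by ring, Real.rpow_zero,
    one_mul]
  ring_nf

theorem rpow_one_div_one_sub_rpow_sub_one_mul {L d δ : ℝ} (hLd : 0 < L / d) (hδ : δ ≠ 1) :
    ((L / d) ^ ((1 : ℝ) / (1 - δ))) ^ (δ - 1) * L = d := by
  obtain ⟨hL, hd⟩ := div_ne_zero_iff.mp hLd.ne'
  have h1δ : (1 : ℝ) - δ ≠ 0 := sub_ne_zero.mpr (Ne.symm hδ)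
  rw [← Real.rpow_mul hLd.le, show (1 : ℝ) / (1 - δ) * (δ - 1) = -1 by field_simp; ring,
    Real.rpow_neg_one]
  field_simp

theorem non_iterative_transformation_method_general
    (δ : ℝ) (hδ0 : δ ≠ 0) (hδ1 : δ ≠ 1)
    (d : ℝ)
    (Φ : ℝ × ℝ × ℝ → ℝ)
    (φ : ℝ → ℝ → ℝ → ℝ → ℝ)
    (hφ : ∀ η > (0 : ℝ), ∀ u v w : ℝ,
      φ η u v w = η ^ ((1 - 3 * δ) / δ) *
        Φ (η ^ (-(1 : ℝ) / δ) * u, η ^ ((δ - 1) / δ) * v,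
           η ^ ((2 * δ - 1) / δ) * w))
    (p L : ℝ)
    (fs : ℝ → ℝ)
    (hODEs : ∀ t > (0 : ℝ),
      iteratedDeriv 3 fs t = φ t (fs t) (deriv fs t) (iteratedDeriv 2 fs t))
    (hfs0 : fs 0 = 0) (hfs'0 : deriv fs 0 = 0)
    (hfs''0 : iteratedDeriv 2 fs 0 = p)
    (hlim : Tendsto (deriv fs) atTop (nhds L))
    (hLd : 0 < L / d)
    (l : ℝ) (hl : l = (L / d) ^ ((1 : ℝ) / (1 - δ)))
    (f : ℝ → ℝ) (hf : f = fun η => l⁻¹ * fs (l ^ δ * η)) :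
    (∀ η > (0 : ℝ),
      iteratedDeriv 3 f η = φ η (f η) (deriv f η) (iteratedDeriv 2 f η)) ∧
    f 0 = 0 ∧ deriv f 0 = 0 ∧
    iteratedDeriv 2 f 0 = l ^ (2 * δ - 1) * p ∧
    Tendsto (deriv f) atTop (nhds d) := by
  have hl_pos : 0 < l := hl ▸ Real.rpow_pos_of_pos hLd _
  have hf' : deriv f = fun η => l ^ (δ - 1) * deriv fs (l ^ δ * η) := by
    simpa [hf] using iteratedDeriv_rpow_rescale hl_pos δ fs 1
  have hf'' : iteratedDeriv 2 f = fun η => l ^ (2 * δ - 1) * iteratedDeriv 2 fs (l ^ δ * η) := by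
    simpa [hf] using iteratedDeriv_rpow_rescale hl_pos δ fs 2
  have hf''' : iteratedDeriv 3 f = fun η => l ^ (3 * δ - 1) * iteratedDeriv 3 fs (l ^ δ * η) := by
    simpa [hf] using iteratedDeriv_rpow_rescale hl_pos δ fs 3
  refine ⟨fun η hη => ?_, by simp [hf, hfs0], by simp [hf', hfs'0], by simp [hf'', hfs''0], ?_⟩
  · simp only [hf''', hf', hf'']
    rw [hODEs (l ^ δ * η) (by positivity), scaling_group_invariance hδ0 hφ hl_pos hη,
      Real.rpow_neg_one, hf]
  · have hd : l ^ (δ - 1) * L = d := hl ▸ rpow_one_div_one_sub_rpow_sub_one_mul hLd hδ1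
    rw [hf', ← hd]
    exact (hlim.comp (tendsto_id.const_mul_atTop (by positivity))).const_mul _

/-- The non-iterative transformation method for the class of boundary value
problems `f''' = φ(η, f, f', f'')`, `f(0) = f'(0) = 0`, `f'(∞) = d`:
solving the normalized initial value problem and rescaling with
`λ = (L/d)^(1/(1−δ))` produces the solution of the boundary value problem. -/
theorem non_iterative_transformation_method
    (δ : ℝ) (hδ0 : δ ≠ 0) (hδ1 : δ ≠ 1)
    (d : ℝ) (hd : d ≠ 0)
    (Φ : ℝ × ℝ × ℝ → ℝ)
    (φ : ℝ → ℝ → ℝ → ℝ → ℝ)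
    (hφ : ∀ η > (0 : ℝ), ∀ u v w : ℝ,
      φ η u v w = η ^ ((1 - 3 * δ) / δ) *
        Φ (η ^ (-(1 : ℝ) / δ) * u, η ^ ((δ - 1) / δ) * v,
           η ^ ((2 * δ - 1) / δ) * w))
    (p L : ℝ)
    (fs : ℝ → ℝ)
    (hfs : ContDiffOn ℝ 3 fs (Set.Ici (0 : ℝ)))
    (hODEs : ∀ t > (0 : ℝ),
      iteratedDeriv 3 fs t = φ t (fs t) (deriv fs t) (iteratedDeriv 2 fs t))
    (hfs0 : fs 0 = 0) (hfs'0 : deriv fs 0 = 0)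
    (hfs''0 : iteratedDeriv 2 fs 0 = p)
    (hlim : Tendsto (deriv fs) atTop (nhds L))
    (hLd : 0 < L / d)
    (l : ℝ) (hl : l = (L / d) ^ ((1 : ℝ) / (1 - δ)))
    (f : ℝ → ℝ) (hf : f = fun η => l⁻¹ * fs (l ^ δ * η)) :
    (∀ η > (0 : ℝ),
      iteratedDeriv 3 f η = φ η (f η) (deriv f η) (iteratedDeriv 2 f η)) ∧
    f 0 = 0 ∧ deriv f 0 = 0 ∧
    iteratedDeriv 2 f 0 = l ^ (2 * δ - 1) * p ∧
    Tendsto (deriv f) atTop (nhds d) :=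
  non_iterative_transformation_method_general δ hδ0 hδ1 d Φ φ hφ p L fs hODEs hfs0 hfs'0 hfs''0 hlim
    hLd l hl f hf
end

section
/- Let λ ∈ ℝ and let f : ℝ → ℝ be real-analytic in a neighbourhood of 0, satisfying f'''(η) + (1/2)·f(η)·f''(η) = 0 near 0, with f(0) = f'(0) = 0 and f''(0) = λ. Then the Taylor coefficients C_n := f^(n)(0)/n! of f at 0 satisfy C_2 = λ/2, C_3 = C_4 = 0, C_5 = −λ²/(2·5!), C_6 = C_7 = 0, C_8 = 11·λ³/(2²·8!), C_9 = C_10 = 0, and C_11 = −375·λ⁴/(2³·11!). -/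
/-!
Differentiating the Blasius equation `f''' = -(1/2) f f''` `n` times with Leibniz's rule gives
`f⁽ⁿ⁺³⁾(0) = -(1/2) ∑ᵢ (n choose i) f⁽ⁱ⁾(0) f⁽ⁿ⁻ⁱ⁺²⁾(0)`, so the initial data `f(0) = f'(0) = 0`,
`f''(0) = λ` determine every derivative at `0`; unrolling the recurrence up to `n = 8` gives the
coefficients.
-/

open Finset Topology

theorem iteratedDeriv_iteratedDeriv {𝕜 F : Type*} [NontriviallyNormedField 𝕜]
    [NormedAddCommGroup F] [NormedSpace 𝕜 F] (m n : ℕ) (f : 𝕜 → F) :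
    iteratedDeriv m (iteratedDeriv n f) = iteratedDeriv (m + n) f := by
  simp only [iteratedDeriv_eq_iterate, Function.iterate_add_apply]

theorem iteratedDeriv_add_three_of_blasius {𝕜 : Type*} [NontriviallyNormedField 𝕜]
    [CompleteSpace 𝕜] {f : 𝕜 → 𝕜} {x : 𝕜} (hf : AnalyticAt 𝕜 f x)
    (hODE : ∀ᶠ η in 𝓝 x, iteratedDeriv 3 f η + (1 / 2) * f η * iteratedDeriv 2 f η = 0)
    (n : ℕ) :
    iteratedDeriv (n + 3) f x = -(1 / 2) * ∑ i ∈ range (n + 1),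
      n.choose i * iteratedDeriv i f x * iteratedDeriv (n - i + 2) f x := by
  have hf''' : iteratedDeriv 3 f =ᶠ[𝓝 x] fun η ↦ -(1 / 2) * (f η * iteratedDeriv 2 f η) :=
    hODE.mono fun η h ↦ by linear_combination h
  have hf'' : AnalyticAt 𝕜 (iteratedDeriv 2 f) x := by
    rw [iteratedDeriv_eq_iterate]
    exact hf.iterated_deriv 2
  calc iteratedDeriv (n + 3) f x = iteratedDeriv n (iteratedDeriv 3 f) x := by
        rw [iteratedDeriv_iteratedDeriv]
    _ = -(1 / 2) * iteratedDeriv n (fun η ↦ f η * iteratedDeriv 2 f η) x := by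
        rw [hf'''.iteratedDeriv_eq, iteratedDeriv_const_mul_field]
    _ = _ := by
        simp only [iteratedDeriv_fun_mul hf.contDiffAt hf''.contDiffAt, iteratedDeriv_iteratedDeriv]

theorem blasius_recurrence_values {K : Type*} [Field K] [CharZero K] {l : K} {d : ℕ → K}
    (h0 : d 0 = 0) (h1 : d 1 = 0) (h2 : d 2 = l)
    (hrec : ∀ n, d (n + 3) = -(1 / 2) * ∑ i ∈ range (n + 1), n.choose i * d i * d (n - i + 2)) :
    d 3 = 0 ∧ d 4 = 0 ∧ d 5 = -l ^ 2 / 2 ∧ d 6 = 0 ∧ d 7 = 0 ∧ d 8 = 11 * l ^ 3 / 2 ^ 2 ∧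
      d 9 = 0 ∧ d 10 = 0 ∧ d 11 = -375 * l ^ 4 / 2 ^ 3 := by
  have h3 : d 3 = 0 := by norm_num [hrec 0, h0]
  have h4 : d 4 = 0 := by norm_num [hrec 1, sum_range_succ, h0, h1]
  have h5 : d 5 = -l ^ 2 / 2 := by
    norm_num [hrec 2, sum_range_succ, h0, h1, h2]
    ring
  have h6 : d 6 = 0 := by norm_num [hrec 3, sum_range_succ, h0, h1, h3, h4]
  have h7 : d 7 = 0 := by norm_num [hrec 4, sum_range_succ, h0, h1, h3, h4]
  have h8 : d 8 = 11 * l ^ 3 / 2 ^ 2 := by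
    norm_num [hrec 5, sum_range_succ, Nat.choose, h0, h1, h2, h3, h4, h5, h6]
    ring
  have h9 : d 9 = 0 := by norm_num [hrec 6, sum_range_succ, h0, h1, h3, h4, h6, h7]
  have h10 : d 10 = 0 := by norm_num [hrec 7, sum_range_succ, h0, h1, h3, h4, h6, h7]
  have h11 : d 11 = -375 * l ^ 4 / 2 ^ 3 := by
    norm_num [hrec 8, sum_range_succ, Nat.choose, h0, h1, h2, h3, h4, h5, h6, h7, h8, h9, h10]
    ring
  exact ⟨h3, h4, h5, h6, h7, h8, h9, h10, h11⟩

/-- The Taylor coefficients of the Blasius series solution at the origin. -/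
theorem blasius_taylor_coefficients
    (l : ℝ) (f : ℝ → ℝ)
    (hf : AnalyticAt ℝ f 0)
    (hODE : ∀ᶠ η in nhds (0 : ℝ),
      iteratedDeriv 3 f η + (1 / 2) * f η * iteratedDeriv 2 f η = 0)
    (hf0 : f 0 = 0) (hf'0 : deriv f 0 = 0)
    (hf''0 : iteratedDeriv 2 f 0 = l)
    (C : ℕ → ℝ) (hC : ∀ n, C n = iteratedDeriv n f 0 / (Nat.factorial n)) :
    C 2 = l / 2 ∧ C 3 = 0 ∧ C 4 = 0 ∧
    C 5 = -l ^ 2 / (2 * Nat.factorial 5) ∧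
    C 6 = 0 ∧ C 7 = 0 ∧
    C 8 = 11 * l ^ 3 / (2 ^ 2 * Nat.factorial 8) ∧
    C 9 = 0 ∧ C 10 = 0 ∧
    C 11 = -375 * l ^ 4 / (2 ^ 3 * Nat.factorial 11) := by
  obtain ⟨d3, d4, d5, d6, d7, d8, d9, d10, d11⟩ :=
    blasius_recurrence_values (d := fun n ↦ iteratedDeriv n f 0) (by simpa using hf0)
      (by simpa using hf'0) hf''0 (iteratedDeriv_add_three_of_blasius hf hODE)
  simp only [hC, hf''0, d3, d4, d5, d6, d7, d8, d9, d10, d11, div_div]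
  norm_num [Nat.factorial]
end
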